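/- For all integers k ≥ 2, r ≥ 4 and n ≥ 9(k²+k+1)+2r, one has ex(n,{kP₃, K_r}) = (k−1)(n−k+1) + ⌊(n−k+1)/2⌋ + e(T(k−1, r−3)). -/

import Mathlib

open SimpleGraph

/-- `G` contains a (not necessarily induced) subgraph copy of `H`. -/
def GContains {V W : Type*} (G : SimpleGraph V) (H : SimpleGraph W) : Prop :=
  ∃ f : W ↪ V, ∀ a b, H.Adj a b → G.Adj (f a) (f b)

/-- The number of edges of a graph. -/
noncomputable def eCount {V : Type*} (G : SimpleGraph V) : ℕ := G.edgeSet.ncard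

/-- The Turán number of a "freeness" predicate `P` : the maximum number of edges of a
graph on `n` vertices satisfying `P`. -/
noncomputable def exNum (n : ℕ) (P : SimpleGraph (Fin n) → Prop) : ℕ :=
  sSup {m | ∃ G : SimpleGraph (Fin n), P G ∧ eCount G = m}

/-- The disjoint union of `k` copies of the path on `ℓ` vertices. -/
def kPaths (k ℓ : ℕ) : SimpleGraph (Fin k × Fin ℓ) where
  Adj x y := x.1 = y.1 ∧ ((x.2 : ℕ) + 1 = (y.2 : ℕ) ∨ (y.2 : ℕ) + 1 = (x.2 : ℕ))
  symm := ⟨fun x y h => ⟨h.1.symm, h.2.symm⟩⟩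
  loopless := ⟨fun x h => by obtain ⟨-, h⟩ := h; omega⟩

/-- The linear forest with one path on `len i` vertices for each `i ∈ s`. -/
def linearForest (s : Finset ℕ) (len : ℕ → ℕ) :
    SimpleGraph {p : ℕ × ℕ // p.1 ∈ s ∧ p.2 < len p.1} where
  Adj x y := x.val.1 = y.val.1 ∧ (x.val.2 + 1 = y.val.2 ∨ y.val.2 + 1 = x.val.2)
  symm := ⟨fun x y h => ⟨h.1.symm, h.2.symm⟩⟩
  loopless := ⟨fun x h => by obtain ⟨-, h⟩ := h; omega⟩

/-- The join `I_a + M_m` of an independent set of `a` vertices with a perfect matching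
on `2m` vertices (vertices `2t` and `2t+1` are matched). -/
def joinIM (a m : ℕ) : SimpleGraph (Fin a ⊕ Fin (2 * m)) where
  Adj x y :=
    match x, y with
    | Sum.inl _, Sum.inr _ => True
    | Sum.inr _, Sum.inl _ => True
    | Sum.inl _, Sum.inl _ => False
    | Sum.inr i, Sum.inr j => i ≠ j ∧ (i : ℕ) / 2 = (j : ℕ) / 2
  symm := by
    constructor
    rintro (x | x) (y | y) h
    · exact h.elim
    · trivial
    · trivial
    · exact ⟨h.1.symm, h.2.symm⟩
  loopless := by
    constructor
    rintro (x | x) h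
    · exact h
    · exact h.1 rfl

/-- `E'` is an edge control set of `F`: a set of edges of `F` such that every other edge of
`F` shares an endpoint with some edge of `E'`. -/
def IsEdgeControlSet {V : Type*} (F : SimpleGraph V) (E' : Finset (Sym2 V)) : Prop :=
  (E' : Set (Sym2 V)) ⊆ F.edgeSet ∧
    ∀ e ∈ F.edgeSet, e ∉ E' → ∃ e' ∈ E', ∃ v, v ∈ e ∧ v ∈ e'

/-- The edge control number `β₁(F)`: the minimum size of an edge control set of `F`. -/
noncomputable def edgeControlNumber {V : Type*} (F : SimpleGraph V) : ℕ :=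
  sInf {m | ∃ E' : Finset (Sym2 V), IsEdgeControlSet F E' ∧ E'.card = m}

/-- The number of triangles (copies of `K₃`) in `F`. -/
noncomputable def triCount {V : Type*} (F : SimpleGraph V) : ℕ :=
  {t : Finset V | F.IsNClique 3 t}.ncard

/-- `G` contains no member of the family `𝒢₁(F) = {F[V(F) ∖ S] : S ⊆ V(F), F[S] edgeless}`. -/
def G1FamFree {VF V : Type*} (F : SimpleGraph VF) (G : SimpleGraph V) : Prop :=
  ∀ S : Set VF, (∀ a ∈ S, ∀ b ∈ S, ¬ F.Adj a b) → ¬ GContains G (F.induce Sᶜ)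

/-- `G` contains no member of the family `𝒢₂(F) = {F[V(F) ∖ S] : S ⊆ V(F), e(F[S]) ≤ 1}`. -/
def G2FamFree {VF V : Type*} (F : SimpleGraph VF) (G : SimpleGraph V) : Prop :=
  ∀ S : Set VF, eCount (F.induce S) ≤ 1 → ¬ GContains G (F.induce Sᶜ)

/-- `G` contains no member of the family
`𝓗ᵢ(F) = {F[V(F) ∖ S] : S ⊆ V(F), Δ(F[S]) ≤ 1, e(F[S]) ≤ i}`. -/
def HiFamFree {VF V : Type*} (F : SimpleGraph VF) (i : ℕ) (G : SimpleGraph V) : Prop :=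
  ∀ S : Set VF, (∀ v ∈ S, (F.neighborSet v ∩ S).ncard ≤ 1) →
    eCount (F.induce S) ≤ i → ¬ GContains G (F.induce Sᶜ)

/-- `G` contains no member of the family `𝓗(F) = {F[V(F) ∖ S] : S ⊆ V(F), Δ(F[S]) ≤ 1}`. -/
def HFamFree {VF V : Type*} (F : SimpleGraph VF) (G : SimpleGraph V) : Prop :=
  ∀ S : Set VF, (∀ v ∈ S, (F.neighborSet v ∩ S).ncard ≤ 1) →
    ¬ GContains G (F.induce Sᶜ)

/-- The common neighborhood of `S` outside `S`. -/
def commonNbhd {V : Type*} (G : SimpleGraph V) (S : Set V) : Set V :=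
  {v | v ∉ S ∧ ∀ u ∈ S, G.Adj v u}

/-- The quantity `n_k = (n/3 − C(ℓ,2)) / ((⌈ℓ/2⌉+1)·C(ℓ,⌊ℓ/2⌋)) + kℓ`. -/
noncomputable def nkQ (n k ℓ : ℕ) : ℚ :=
  ((n : ℚ) / 3 - (ℓ.choose 2 : ℚ)) /
    ((((ℓ + 1) / 2 + 1 : ℕ) : ℚ) * (ℓ.choose (ℓ / 2) : ℚ)) + (k : ℚ) * (ℓ : ℚ)

/-- The set of vertices belonging to some `⌊ℓ/2⌋`-set whose common neighborhood outside it
has size at least `n_k`. -/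
def bigA (n k ℓ : ℕ) (G : SimpleGraph (Fin n)) : Set (Fin n) :=
  {v | ∃ S : Finset (Fin n), v ∈ S ∧ S.card = ℓ / 2 ∧
    nkQ n k ℓ ≤ ((commonNbhd G ↑S).ncard : ℚ)}

/-!
Upper bound. A vertex of degree at least `3k - 1` can always be made the centre of one more
disjoint cherry, so in a `kP₃`-free graph the set `D` of such vertices has at most `k - 1`
elements, and a maximal cherry packing outside `D` has fewer than `k - |D|` cherries; the vertices
outside `D` that it misses span a matching. If `|D| ≤ k - 2`, bounding degrees (by `n - 1` on `D`
and `3k - 2` on the packing) already gives fewer edges, as `n` is large. If `|D| = k - 1` the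
packing is empty: when `D` contains no `K_{r-2}`, Turán's theorem bounds the edges inside `D`,
at most `(k - 1)(n - k + 1)` edges leave `D`, and the rest is a matching; when `D` contains a
`K_{r-2}`, every matching edge has an endpoint missing some vertex of this clique, and the count
drops to `(k - 1)(n - 1)`.

Lower bound. In `T(k - 1, r - 3)` joined to a maximum matching on `n - k + 1` vertices, every
cherry uses one of the `k - 1` Turán vertices, and a clique has at most `r - 3` Turán vertices
and two matching vertices.
-/

open Finset Function

theorem exNum_eq {n m : ℕ} {P : SimpleGraph (Fin n) → Prop}
    (hle : ∀ G, P G → eCount G ≤ m) {G₀ : SimpleGraph (Fin n)} (hG₀ : P G₀)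
    (hm : eCount G₀ = m) : exNum n P = m :=
  IsGreatest.csSup_eq ⟨⟨G₀, hG₀, hm⟩, by rintro _ ⟨G, hG, rfl⟩; exact hle G hG⟩

namespace SimpleGraph

variable {V W : Type*} {G : SimpleGraph V}

theorem gContains_iff_isContained {H : SimpleGraph W} : GContains G H ↔ H ⊑ G :=
  isContained_iff_exists_le_comap.symm

theorem gContains_top_iff_not_cliqueFree {r : ℕ} :
    GContains G (⊤ : SimpleGraph (Fin r)) ↔ ¬ G.CliqueFree r := by
  rw [gContains_iff_isContained, not_cliqueFree_iff_top_isContained]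

theorem eCount_eq_card_edgeFinset [Fintype V] [DecidableRel G.Adj] :
    eCount G = #G.edgeFinset := by
  rw [eCount, edgeFinset, Set.ncard_eq_toFinset_card']

theorem gContains_congr_right {V' : Type*} {G' : SimpleGraph V'} (e : G ≃g G')
    (H : SimpleGraph W) : GContains G H ↔ GContains G' H := by
  rw [gContains_iff_isContained, gContains_iff_isContained, isContained_congr_right e]

theorem CliqueFree.card_lt_of_isClique {n : ℕ} (h : G.CliqueFree n)
    {s : Finset V} (hs : G.IsClique (s : Set V)) : #s < n := by
  by_contra! hn
  obtain ⟨t, hts, ht⟩ := exists_subset_card_eq hn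
  exact h t ⟨hs.subset (by simpa using hts), ht⟩

/-- `G[T]` is a matching. -/
def IsCherryFreeOn (G : SimpleGraph V) (T : Finset V) : Prop :=
  ∀ ⦃v x y⦄, v ∈ T → x ∈ T → y ∈ T → G.Adj v x → G.Adj v y → x = y

theorem IsCherryFreeOn.cliqueFree_three [Fintype V] (hG : G.IsCherryFreeOn univ) :
    G.CliqueFree 3 := by
  classical
  intro s hs
  obtain ⟨a, b, c, hab, hac, hbc, -⟩ := is3Clique_iff.mp hs
  exact hbc.ne (hG (mem_univ a) (mem_univ b) (mem_univ c) hab hac)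

theorem exists_subset_isNClique_of_not_cliqueFree_induce {X : Finset V} {q : ℕ}
    (hX : ¬ (G.induce X).CliqueFree q) : ∃ Q ⊆ X, G.IsNClique q Q := by
  obtain ⟨t, ht⟩ := not_forall_not.mp hX
  exact ⟨t.map (Function.Embedding.subtype _), fun v hv => by
    obtain ⟨w, -, rfl⟩ := mem_map.mp hv; exact w.2, ht.map.mono (map_comap_le _ _)⟩

/-- `m` vertex-disjoint cherries `f (i, 0) - f (i, 1) - f (i, 2)` in `G`. -/
def IsCherryPacking (G : SimpleGraph V) {m : ℕ} (f : Fin m × Fin 3 → V) : Prop :=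
  Injective f ∧ ∀ i, G.Adj (f (i, 1)) (f (i, 0)) ∧ G.Adj (f (i, 1)) (f (i, 2))

theorem kPaths_adj_iff {k : ℕ} {i i' : Fin k} {j j' : Fin 3} :
    (kPaths k 3).Adj (i, j) (i', j') ↔
      i = i' ∧ (j = 1 ∧ (j' = 0 ∨ j' = 2) ∨ j' = 1 ∧ (j = 0 ∨ j = 2)) := by
  simp only [kPaths, Fin.ext_iff, Fin.val_zero, Fin.val_one, Fin.val_two]
  omega

theorem gContains_kPaths_iff {k : ℕ} :
    GContains G (kPaths k 3) ↔ ∃ f : Fin k × Fin 3 → V, IsCherryPacking G f := by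
  constructor
  · rintro ⟨f, hf⟩
    exact ⟨f, f.injective, fun i => ⟨hf _ _ (by simp [kPaths_adj_iff]),
      hf _ _ (by simp [kPaths_adj_iff])⟩⟩
  · rintro ⟨f, hinj, hf⟩
    refine ⟨⟨f, hinj⟩, ?_⟩
    rintro ⟨i, j⟩ ⟨i', j'⟩ h
    obtain ⟨rfl, ⟨rfl, rfl | rfl⟩ | ⟨rfl, rfl | rfl⟩⟩ := kPaths_adj_iff.mp h
    exacts [(hf i).1, (hf i).2, (hf i).1.symm, (hf i).2.symm]

namespace IsCherryPacking

variable {m : ℕ} {f : Fin m × Fin 3 → V}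

theorem castLE {m' : ℕ} (hf : IsCherryPacking G f) (h : m' ≤ m) :
    IsCherryPacking G (f ∘ Prod.map (Fin.castLE h) id) :=
  ⟨hf.1.comp fun _ _ hab => by simpa [Prod.ext_iff, Fin.ext_iff] using hab, fun i => hf.2 _⟩

theorem snoc (hf : IsCherryPacking G f) {x v y : V} (hvx : G.Adj v x) (hvy : G.Adj v y)
    (hxy : x ≠ y) (hx : x ∉ Set.range f) (hv : v ∉ Set.range f) (hy : y ∉ Set.range f) :
    IsCherryPacking G (fun p : Fin (m + 1) × Fin 3 => Fin.lastCases (![x, v, y] p.2)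
      (fun i => f (i, p.2)) p.1) := by
  refine ⟨?_, fun i => ?_⟩
  · rintro ⟨i, j⟩ ⟨i', j'⟩ h
    induction i using Fin.lastCases <;> induction i' using Fin.lastCases <;>
      simp only [Fin.lastCases_last, Fin.lastCases_castSucc] at h
    · fin_cases j <;> fin_cases j' <;> simp_all [hvx.ne, hvy.ne, hvx.ne.symm, hvy.ne.symm]
    · fin_cases j <;> simp at h <;> simp_all [Set.mem_range]
    · fin_cases j' <;> simp at h <;> simp_all [Set.mem_range]
    · simpa [Prod.ext_iff] using hf.1 h
  · induction i using Fin.lastCases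
    · simpa using ⟨hvx, hvy⟩
    · simpa using hf.2 _

theorem snoc_mem {P : V → Prop} (hf : ∀ p, P (f p)) {x v y : V} (hx : P x) (hv : P v)
    (hy : P y) (p : Fin (m + 1) × Fin 3) :
    P (Fin.lastCases (![x, v, y] p.2) (fun i => f (i, p.2)) p.1) := by
  obtain ⟨i, j⟩ := p
  induction i using Fin.lastCases
  · fin_cases j <;> simpa
  · simpa using hf _

end IsCherryPacking

section Finite

variable [Fintype V] [DecidableEq V]

theorem exists_isCherryPacking_isCherryFreeOn_sdiff (X : Finset V) :
    ∃ (m : ℕ) (f : Fin m × Fin 3 → V), IsCherryPacking G f ∧ (∀ p, f p ∈ X) ∧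
      G.IsCherryFreeOn (X \ univ.image f) := by
  classical
  let P (m : ℕ) := ∃ f : Fin m × Fin 3 → V, IsCherryPacking G f ∧ ∀ p, f p ∈ X
  have hP0 : P 0 := ⟨fun p => p.1.elim0, ⟨fun p => p.1.elim0, fun i => i.elim0⟩,
    fun p => p.1.elim0⟩
  obtain ⟨f, hf, hfX⟩ := Nat.findGreatest_spec (Nat.zero_le (Fintype.card V)) hP0
  refine ⟨_, f, hf, hfX, fun v x y hv hx hy hvx hvy => by_contra fun hxy => ?_⟩
  simp only [mem_sdiff, mem_image, mem_univ, true_and, not_exists] at hv hx hy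
  have hsucc := hf.snoc hvx hvy hxy (by simpa using hx.2) (by simpa using hv.2)
    (by simpa using hy.2)
  have hcard := Fintype.card_le_of_injective _ hsucc.1
  simp only [Fintype.card_prod, Fintype.card_fin] at hcard
  exact Nat.findGreatest_is_greatest (P := P) (n := Fintype.card V) (Nat.lt_succ_self _)
    (by omega) ⟨_, hsucc, IsCherryPacking.snoc_mem hfX hx.1 hv.1 hy.1⟩

variable [DecidableRel G.Adj]

theorem IsCherryPacking.gContains_kPaths_of_le_degree {m k : ℕ} {f : Fin m × Fin 3 → V}
    {A : Finset V} (hf : IsCherryPacking G f) (hfA : ∀ p, f p ∉ A) (hk : m + #A = k)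
    (hdeg : ∀ v ∈ A, 3 * k - 1 ≤ G.degree v) :
    GContains G (kPaths k 3) := by
  induction A using Finset.induction_on generalizing m with
  | empty =>
    subst hk
    exact gContains_kPaths_iff.mpr ⟨f, hf⟩
  | insert v A hvA ih =>
    rw [card_insert_of_notMem hvA] at hk
    have hR : 1 < #(G.neighborFinset v \ (univ.image f ∪ A)) := by
      have hused : #(univ.image f ∪ A) ≤ 3 * m + #A := by
        grw [card_union_le, card_image_le, card_univ, Fintype.card_prod, Fintype.card_fin,
          Fintype.card_fin, mul_comm]
      have hsdiff := le_card_sdiff (univ.image f ∪ A) (G.neighborFinset v)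
      rw [card_neighborFinset_eq_degree] at hsdiff
      have := hdeg v (mem_insert_self v A)
      omega
    obtain ⟨x, hx, y, hy, hxy⟩ := one_lt_card.mp hR
    simp only [mem_sdiff, mem_neighborFinset, mem_union, mem_image, mem_univ, true_and,
      not_or, not_exists] at hx hy
    have hv : v ∉ Set.range f := fun ⟨p, hp⟩ => hfA p (hp ▸ mem_insert_self v A)
    refine ih (hf.snoc hx.1 hy.1 hxy (by simpa using hx.2.1) hv (by simpa using hy.2.1))
      (snoc_mem (P := (· ∉ A)) (fun p h => hfA p (mem_insert_of_mem h)) hx.2.2 hvA hy.2.2)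
      (by omega) fun u hu => hdeg u (mem_insert_of_mem hu)

theorem add_card_lt_of_kPaths_free {k m : ℕ} (hG : ¬ GContains G (kPaths k 3))
    {f : Fin m × Fin 3 → V} (hf : IsCherryPacking G f) {A : Finset V} (hfA : ∀ p, f p ∉ A)
    (hdeg : ∀ v ∈ A, 3 * k - 1 ≤ G.degree v) : m + #A < k := by
  by_contra! hle
  rcases le_or_gt k m with hkm | hmk
  · exact hG (gContains_kPaths_iff.mpr ⟨_, hf.castLE hkm⟩)
  · obtain ⟨B, hBA, hB⟩ := exists_subset_card_eq (s := A) (n := k - m) (by omega)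
    exact hG (hf.gContains_kPaths_of_le_degree (fun p h => hfA p (hBA h)) (by omega)
      fun v hv => hdeg v (hBA hv))

namespace IsCherryFreeOn

variable {T : Finset V} (hT : G.IsCherryFreeOn T)
include hT

theorem card_filter_mem_le_one (v : V) : #{e ∈ G.edgeFinset ∩ T.sym2 | v ∈ e} ≤ 1 := by
  refine card_le_one.mpr fun e₁ he₁ e₂ he₂ => ?_
  simp only [mem_filter, mem_inter, mem_edgeFinset, mem_sym2_iff] at he₁ he₂
  obtain ⟨w₁, rfl⟩ := Sym2.mem_iff_exists.mp he₁.2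
  obtain ⟨w₂, rfl⟩ := Sym2.mem_iff_exists.mp he₂.2
  rw [hT (he₁.1.2 v (Sym2.mem_mk_left v w₁)) (he₁.1.2 w₁ (Sym2.mem_mk_right v w₁))
    (he₂.1.2 w₂ (Sym2.mem_mk_right v w₂)) he₁.1.1 he₂.1.1]

theorem two_mul_card_edgeFinset_inter_sym2_le : 2 * #(G.edgeFinset ∩ T.sym2) ≤ #T := by
  have := card_nsmul_le_card_nsmul (fun (e : Sym2 V) v => v ∈ e) (m := 2) (n := 1)
    (s := G.edgeFinset ∩ T.sym2) (t := T) ?_ fun v _ => hT.card_filter_mem_le_one v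
  · simpa [mul_comm] using this
  · intro e he
    induction e using Sym2.ind with
    | _ a b =>
    simp only [mem_inter, mem_edgeFinset, mem_edgeSet, mem_sym2_iff, Sym2.mem_iff,
      forall_eq_or_imp, forall_eq] at he
    refine le_trans ?_ (card_le_card (s := {a, b}) fun v hv => ?_)
    · rw [card_pair he.1.ne]
    · simp only [mem_insert, mem_singleton] at hv
      rcases hv with rfl | rfl <;> simp [bipartiteAbove, he.2]

theorem card_edgeFinset_inter_sym2_le_of_forall_exists_mem {B : Finset V}
    (hB : ∀ e ∈ G.edgeFinset ∩ T.sym2, ∃ v ∈ B, v ∈ e) :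
    #(G.edgeFinset ∩ T.sym2) ≤ #B := by
  have := card_nsmul_le_card_nsmul (fun (e : Sym2 V) v => v ∈ e) (m := 1) (n := 1)
    (s := G.edgeFinset ∩ T.sym2) (t := B) (fun e he => ?_)
    fun v _ => hT.card_filter_mem_le_one v
  · simpa using this
  · obtain ⟨v, hvB, hve⟩ := hB e he
    exact one_le_card.mpr ⟨v, mem_filter.mpr ⟨hvB, hve⟩⟩

end IsCherryFreeOn

theorem card_edgeFinset_le_sum_degree_add (X : Finset V) :
    #G.edgeFinset ≤ ∑ v ∈ X, G.degree v + #(G.edgeFinset ∩ Xᶜ.sym2) := by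
  calc #G.edgeFinset ≤ #(X.biUnion (G.incidenceFinset ·) ∪ G.edgeFinset ∩ Xᶜ.sym2) := by
        refine card_le_card fun e he => ?_
        by_cases hX : ∃ v ∈ X, v ∈ e
        · obtain ⟨v, hv, hve⟩ := hX
          exact mem_union_left _
            (mem_biUnion.mpr ⟨v, hv, by simp_all [incidenceFinset_eq_filter]⟩)
        · exact mem_union_right _ (mem_inter.mpr ⟨he, mem_sym2_iff.mpr fun v hv =>
            mem_compl.mpr fun hvX => hX ⟨v, hvX, hv⟩⟩)
    _ ≤ ∑ v ∈ X, G.degree v + #(G.edgeFinset ∩ Xᶜ.sym2) := by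
        grw [card_union_le, card_biUnion_le]
        simp only [card_incidenceFinset_eq_degree, le_refl]

theorem card_edgeFinset_le_add_card_mul_add (X : Finset V) :
    #G.edgeFinset ≤ #(G.edgeFinset ∩ X.sym2) + #X * #Xᶜ + #(G.edgeFinset ∩ Xᶜ.sym2) := by
  calc #G.edgeFinset
      ≤ #(G.edgeFinset ∩ X.sym2 ∪ (X ×ˢ Xᶜ).image (fun p => s(p.1, p.2)) ∪
          G.edgeFinset ∩ Xᶜ.sym2) := by
        refine card_le_card fun e he => ?_
        induction e using Sym2.ind with
        | _ a b =>
        by_cases ha : a ∈ X <;> by_cases hb : b ∈ X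
        · simp [he, ha, hb]
        · simp only [mem_union, mem_image, mem_product, mem_compl]
          exact Or.inl (Or.inr ⟨(a, b), ⟨ha, hb⟩, rfl⟩)
        · simp only [mem_union, mem_image, mem_product, mem_compl]
          exact Or.inl (Or.inr ⟨(b, a), ⟨hb, ha⟩, Sym2.eq_swap⟩)
        · simp [he, ha, hb]
    _ ≤ #(G.edgeFinset ∩ X.sym2) + #X * #Xᶜ + #(G.edgeFinset ∩ Xᶜ.sym2) := by
        grw [card_union_le, card_union_le, card_image_le, card_product]

theorem card_edgeFinset_inter_sym2_le_turanGraph {X : Finset V} {q : ℕ} (hq : 0 < q)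
    (hX : (G.induce X).CliqueFree (q + 1)) :
    #(G.edgeFinset ∩ X.sym2) ≤ #(turanGraph #X q).edgeFinset := by
  have : Nontrivial (Fin (q + 1)) := Fin.nontrivial_iff_two_le.mpr (by omega)
  have hmap := map_edgeFinset_induce (G := G) (s := (X : Set V))
  rw [Finset.toFinset_coe] at hmap
  rw [← hmap, card_map]
  have := card_edgeFinset_le_extremalNumber (G := G.induce (X : Set V))
    (H := (⊤ : SimpleGraph (Fin (q + 1)))) (cliqueFree_iff_top_free.mp (by simpa using hX))
  rw [extremalNumber_top, Fintype.card_fin, add_tsub_cancel_right] at this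
  convert this using 4 <;> simp

theorem card_edgeFinset_le_sum_degree_add_half {X : Finset V} (hT : G.IsCherryFreeOn Xᶜ) :
    #G.edgeFinset ≤ ∑ v ∈ X, G.degree v + #Xᶜ / 2 := by
  have := card_edgeFinset_le_sum_degree_add (G := G) X
  have := hT.two_mul_card_edgeFinset_inter_sym2_le
  omega

theorem card_edgeFinset_le_turanGraph_add {X : Finset V} {q : ℕ} (hq : 0 < q)
    (hX : (G.induce X).CliqueFree (q + 1)) (hT : G.IsCherryFreeOn Xᶜ) :
    #G.edgeFinset ≤ #(turanGraph #X q).edgeFinset + #X * #Xᶜ + #Xᶜ / 2 := by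
  have := card_edgeFinset_le_add_card_mul_add (G := G) X
  have := card_edgeFinset_inter_sym2_le_turanGraph hq hX
  have := hT.two_mul_card_edgeFinset_inter_sym2_le
  omega

theorem card_edgeFinset_le_card_mul {X : Finset V} {q : ℕ} (hG : G.CliqueFree (q + 2))
    (hX : ¬ (G.induce X).CliqueFree q) (hT : G.IsCherryFreeOn Xᶜ) :
    #G.edgeFinset ≤ #X * (Fintype.card V - 1) := by
  obtain ⟨Q, hQX, hQ⟩ := exists_subset_isNClique_of_not_cliqueFree_induce hX
  have hcover : ∀ e ∈ G.edgeFinset ∩ Xᶜ.sym2,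
      ∃ w ∈ Q.biUnion (Gᶜ.neighborFinset ·), w ∈ e := by
    intro e he
    obtain ⟨he, heX⟩ := mem_inter.mp he
    by_contra! hnot
    have hadj : ∀ w ∈ e, ∀ u ∈ Q, G.Adj w u := by
      intro w hw u hu
      by_contra hwu
      refine hnot w (mem_biUnion.mpr ⟨u, hu, ?_⟩) hw
      rw [mem_neighborFinset, compl_adj]
      exact ⟨fun h => mem_compl.mp (mem_sym2_iff.mp heX w hw) (h ▸ hQX hu),
        fun h => hwu h.symm⟩
    induction e using Sym2.ind with
    | _ a b =>
    exact hG _ ((hQ.insert (hadj b (Sym2.mem_mk_right a b))).insert (a := a)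
      (forall_mem_insert _ _ _ |>.mpr ⟨mem_edgeFinset.mp he, hadj a (Sym2.mem_mk_left a b)⟩))
  have hdeg : ∀ v, G.degree v + Gᶜ.degree v = Fintype.card V - 1 := fun v => by
    have := G.degree_lt_card_verts v
    rw [degree_compl]
    omega
  calc #G.edgeFinset ≤ ∑ v ∈ X, G.degree v + #(G.edgeFinset ∩ Xᶜ.sym2) :=
        card_edgeFinset_le_sum_degree_add X
    _ ≤ ∑ v ∈ X, G.degree v + ∑ v ∈ Q, Gᶜ.degree v := by
        grw [hT.card_edgeFinset_inter_sym2_le_of_forall_exists_mem hcover, card_biUnion_le]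
        simp only [card_neighborFinset_eq_degree, le_refl]
    _ ≤ ∑ v ∈ X, (G.degree v + Gᶜ.degree v) := by
        rw [sum_add_distrib]
        grw [sum_le_sum_of_subset hQX]
    _ = #X * (Fintype.card V - 1) := by simp [hdeg]

theorem card_edgeFinset_le_of_card_add_two_le {k m : ℕ}
    (hn : 9 * (k ^ 2 + k + 1) ≤ Fintype.card V) {D : Finset V} (hD : #D + 2 ≤ k)
    (hDc : ∀ v ∉ D, G.degree v ≤ 3 * k - 2) {f : Fin m × Fin 3 → V}
    (hf : IsCherryPacking G f) (hfD : ∀ p, f p ∈ Dᶜ) (hmD : m + #D < k)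
    (hT : G.IsCherryFreeOn (Dᶜ \ univ.image f)) :
    #G.edgeFinset ≤ (k - 1) * (Fintype.card V - k + 1) + (Fintype.card V - k + 1) / 2 := by
  set n := Fintype.card V
  set C := univ.image f
  have hCD : Disjoint D C := disjoint_right.mpr fun v hv => mem_compl.mp
    (by obtain ⟨p, -, rfl⟩ := mem_image.mp hv; exact hfD p)
  have hC : #C = 3 * m := by
    rw [card_image_of_injective _ hf.1, card_univ, Fintype.card_prod, Fintype.card_fin,
      Fintype.card_fin, mul_comm]
  have hsum : ∑ v ∈ D ∪ C, G.degree v ≤ #D * (n - 1) + 3 * m * (3 * k - 2) := by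
    rw [sum_union hCD, ← hC]
    grw [sum_le_card_nsmul D _ (n - 1) fun v _ => by have := G.degree_lt_card_verts v; omega,
      sum_le_card_nsmul C _ (3 * k - 2) fun v hv => hDc v (disjoint_right.mp hCD hv)]
    simp
  have hbound := card_edgeFinset_le_sum_degree_add_half (X := D ∪ C)
    (by rwa [compl_union, ← sdiff_eq_inter_compl])
  rw [card_compl, card_union_of_disjoint hCD, hC] at hbound
  have : #D * (n - 1) + 3 * m * (3 * k - 2) + (n - (#D + 3 * m)) / 2 ≤
      (k - 1) * (n - k + 1) + (n - k + 1) / 2 := by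
    have ha : (n - (#D + 3 * m)) / 2 * 2 ≤ n := by omega
    have hb : n - k ≤ (n - k + 1) / 2 * 2 := by omega
    generalize (n - (#D + 3 * m)) / 2 = a at *
    generalize (n - k + 1) / 2 = b at *
    have h1 : 1 ≤ n := by nlinarith
    have h2 : k ≤ n := by nlinarith
    zify [h1, h2, (by omega : 2 ≤ 3 * k), (by omega : 1 ≤ k)] at *
    nlinarith [mul_le_mul_of_nonneg_right (show (m : ℤ) ≤ k - 1 - #D by omega)
        (show (0 : ℤ) ≤ 9 * k - 6 by omega),
      mul_le_mul_of_nonneg_right (show (1 : ℤ) ≤ k - 1 - #D by omega)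
        (show (0 : ℤ) ≤ n - 10 * k + 7 by nlinarith),
      mul_le_mul_of_nonneg_right (show (#D : ℤ) ≤ k by omega) (show (0 : ℤ) ≤ k by omega)]
  omega

theorem card_edgeFinset_le_of_kPaths_free_of_cliqueFree {k r : ℕ} (hk : 2 ≤ k) (hr : 4 ≤ r)
    (hn : 9 * (k ^ 2 + k + 1) ≤ Fintype.card V) (hP : ¬ GContains G (kPaths k 3))
    (hK : G.CliqueFree r) :
    #G.edgeFinset ≤ (k - 1) * (Fintype.card V - k + 1) + (Fintype.card V - k + 1) / 2 +
      #(turanGraph (k - 1) (r - 3)).edgeFinset := by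
  set n := Fintype.card V
  set D : Finset V := {v | 3 * k - 1 ≤ G.degree v}
  obtain ⟨M, f, hf, hfD, hT⟩ := exists_isCherryPacking_isCherryFreeOn_sdiff (G := G) Dᶜ
  have hMD : M + #D < k := add_card_lt_of_kPaths_free hP hf (fun p => mem_compl.mp (hfD p))
    fun v hv => (mem_filter.mp hv).2
  rcases (by omega : #D + 2 ≤ k ∨ #D = k - 1) with hD | hD
  · exact (card_edgeFinset_le_of_card_add_two_le hn hD
      (fun v hv => by simp only [D, mem_filter, mem_univ, true_and] at hv; omega) hf hfD hMD
      hT).trans (Nat.le_add_right _ _)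
  obtain rfl : M = 0 := by omega
  have hT : G.IsCherryFreeOn Dᶜ := by simpa using hT
  have hDc : #Dᶜ = n - k + 1 := by rw [card_compl, hD]; omega
  by_cases hcl : (G.induce D).CliqueFree (r - 3 + 1)
  · have := card_edgeFinset_le_turanGraph_add (by omega) hcl hT
    rw [hD, hDc] at this
    omega
  · have : #G.edgeFinset ≤ #D * (n - 1) :=
      card_edgeFinset_le_card_mul (by rwa [show r - 3 + 1 + 2 = r by omega]) hcl hT
    have h1 : (k - 1) * (n - 1) = (k - 1) * (n - k + 1) + (k - 1) * (k - 2) := by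
      rw [← mul_add]; congr 1; omega
    have h2 : (k - 1) * (k - 2) ≤ k ^ 2 := by
      rw [sq]; exact Nat.mul_le_mul (Nat.sub_le k 1) (Nat.sub_le k 2)
    rw [hD] at this
    omega

end Finite

def join (G : SimpleGraph V) (H : SimpleGraph W) : SimpleGraph (V ⊕ W) where
  Adj
    | .inl a, .inl b => G.Adj a b
    | .inr a, .inr b => H.Adj a b
    | _, _ => True
  symm := by
    constructor
    rintro (a | a) (b | b) h
    exacts [h.symm, trivial, trivial, h.symm]
  loopless := by
    constructor
    rintro (a | a) h
    exacts [G.irrefl h, H.irrefl h]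

variable {H : SimpleGraph W}

@[simp] theorem join_adj_inl_inl {a b : V} : (join G H).Adj (.inl a) (.inl b) ↔ G.Adj a b :=
  Iff.rfl

@[simp] theorem join_adj_inr_inr {a b : W} : (join G H).Adj (.inr a) (.inr b) ↔ H.Adj a b :=
  Iff.rfl

@[simp] theorem join_adj_inl_inr {a : V} {b : W} : (join G H).Adj (.inl a) (.inr b) :=
  trivial

@[simp] theorem join_adj_inr_inl {a : W} {b : V} : (join G H).Adj (.inr a) (.inl b) :=
  trivial

instance [DecidableRel G.Adj] [DecidableRel H.Adj] : DecidableRel (join G H).Adj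
  | .inl a, .inl b => decidable_of_iff (G.Adj a b) Iff.rfl
  | .inr a, .inr b => decidable_of_iff (H.Adj a b) Iff.rfl
  | .inl _, .inr _ => isTrue trivial
  | .inr _, .inl _ => isTrue trivial

theorem cliqueFree_join {a b : ℕ} (hG : G.CliqueFree (a + 1)) (hH : H.CliqueFree (b + 1)) :
    (join G H).CliqueFree (a + b + 1) := by
  intro s hs
  have hl := hG.card_lt_of_isClique (s := s.toLeft) fun x hx y hy hxy =>
    hs.1 (mem_toLeft.mp hx) (mem_toLeft.mp hy) (Sum.inl_injective.ne hxy)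
  have hr := hH.card_lt_of_isClique (s := s.toRight) fun x hx y hy hxy =>
    hs.1 (mem_toRight.mp hx) (mem_toRight.mp hy) (Sum.inr_injective.ne hxy)
  have := card_toLeft_add_card_toRight (u := s)
  have := hs.2
  omega

theorem not_gContains_kPaths_join [Fintype V] [Fintype W] {k : ℕ} (hH : H.IsCherryFreeOn univ)
    (hV : Fintype.card V < k) : ¬ GContains (join G H) (kPaths k 3) := by
  rintro hP
  obtain ⟨f, hinj, hf⟩ := gContains_kPaths_iff.mp hP
  have hleft : ∀ i, ∃ j a, f (i, j) = .inl a := by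
    intro i
    by_contra! hR
    have hr : ∀ j, ∃ b, f (i, j) = .inr b := fun j => by
      rcases h : f (i, j) with a | b
      exacts [absurd h (hR j a), ⟨b, rfl⟩]
    obtain ⟨b₀, h₀⟩ := hr 0
    obtain ⟨b₁, h₁⟩ := hr 1
    obtain ⟨b₂, h₂⟩ := hr 2
    have h₀₂ : b₀ ≠ b₂ := by
      rintro rfl
      exact absurd (congrArg Prod.snd (hinj (h₀.trans h₂.symm))) (by simp)
    have := hf i
    rw [h₀, h₁, h₂] at this
    exact h₀₂ (hH (mem_univ _) (mem_univ _) (mem_univ _) this.1 this.2)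
  choose j c hc using hleft
  have hc_inj : Function.Injective c := fun i i' h => by
    simpa using congrArg Prod.fst (hinj ((hc i).trans (h ▸ (hc i').symm)))
  have := Fintype.card_le_of_injective c hc_inj
  rw [Fintype.card_fin] at this
  omega

section card

variable [Fintype V] [Fintype W] [DecidableRel G.Adj] [DecidableRel H.Adj]

theorem degree_join_inl (a : V) : (join G H).degree (.inl a) = G.degree a + Fintype.card W := by
  rw [← card_neighborFinset_eq_degree, ← card_neighborFinset_eq_degree, ← card_univ,
    ← card_disjSum]
  congr 1
  ext (b | b) <;> simp

theorem degree_join_inr (b : W) : (join G H).degree (.inr b) = H.degree b + Fintype.card V := by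
  rw [← card_neighborFinset_eq_degree, ← card_neighborFinset_eq_degree, ← card_univ, add_comm,
    ← card_disjSum]
  congr 1
  ext (a | a) <;> simp

theorem card_edgeFinset_join : #(join G H).edgeFinset =
    #G.edgeFinset + #H.edgeFinset + Fintype.card V * Fintype.card W := by
  have := sum_degrees_eq_twice_card_edges (join G H)
  rw [Fintype.sum_sum_type] at this
  simp only [degree_join_inl, degree_join_inr, sum_add_distrib,
    sum_degrees_eq_twice_card_edges, sum_const, card_univ, smul_eq_mul] at this
  linarith [mul_comm (Fintype.card V) (Fintype.card W)]

end card

def pairing (N : ℕ) : SimpleGraph (Fin N) :=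
  fromEdgeSet (Set.range fun j : Fin (N / 2) => s(⟨2 * j, by omega⟩, ⟨2 * j + 1, by omega⟩))

theorem pairing_adj {N : ℕ} {i j : Fin N} :
    (pairing N).Adj i j ↔ i ≠ j ∧ (i : ℕ) / 2 = j / 2 := by
  simp only [pairing, fromEdgeSet_adj, Set.mem_range, Sym2.eq_iff, Fin.ext_iff, ne_eq]
  constructor
  · rintro ⟨⟨t, ht⟩, hij⟩
    omega
  · rintro ⟨hij, h⟩
    exact ⟨⟨⟨i / 2, by omega⟩, by dsimp only; omega⟩, hij⟩

theorem isCherryFreeOn_pairing (N : ℕ) : (pairing N).IsCherryFreeOn univ := by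
  intro v x y _ _ _ hx hy
  rw [pairing_adj] at hx hy
  rw [Fin.ext_iff] at *
  omega

theorem eCount_pairing (N : ℕ) : eCount (pairing N) = N / 2 := by
  rw [eCount, pairing, edgeSet_fromEdgeSet, Disjoint.sdiff_eq_left, Set.ncard_range_of_injective,
    Nat.card_eq_fintype_card, Fintype.card_fin]
  · intro j j' h
    simp only [Sym2.eq_iff, Fin.ext_iff] at h
    omega
  · refine Set.disjoint_left.mpr ?_
    rintro _ ⟨j, rfl⟩ hdiag
    simp at hdiag

end SimpleGraph

/-- Corollary: Turán number of `kP₃` and `K_r` for `r ≥ 4`. -/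
theorem ex_kP3_and_Kr (k r n : ℕ) (hk : 2 ≤ k) (hr : 4 ≤ r)
    (hn : 9 * (k ^ 2 + k + 1) + 2 * r ≤ n) :
    exNum n (fun G => ¬ GContains G (kPaths k 3) ∧
        ¬ GContains G (⊤ : SimpleGraph (Fin r))) =
      (k - 1) * (n - k + 1) + (n - k + 1) / 2 + eCount (turanGraph (k - 1) (r - 3)) := by
  classical
  have hkn : k ≤ n := by nlinarith
  have hcard : Fintype.card (Fin (k - 1) ⊕ Fin (n - k + 1)) = n := by simp; omega
  set L := join (turanGraph (k - 1) (r - 3)) (pairing (n - k + 1))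
  have e := L.overFinIso hcard
  refine exNum_eq (fun G ⟨hP, hK⟩ => ?_) (G₀ := L.overFin hcard) ⟨?_, ?_⟩ ?_
  · rw [eCount_eq_card_edgeFinset, eCount_eq_card_edgeFinset]
    simpa using card_edgeFinset_le_of_kPaths_free_of_cliqueFree hk hr (by simp; omega) hP
      (by simpa [gContains_top_iff_not_cliqueFree] using hK)
  · rw [← gContains_congr_right e]
    exact not_gContains_kPaths_join (isCherryFreeOn_pairing _) (by simp; omega)
  · rw [← gContains_congr_right e, gContains_top_iff_not_cliqueFree, not_not]
    exact (cliqueFree_join (turanGraph_cliqueFree (by omega))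
      (isCherryFreeOn_pairing _).cliqueFree_three).mono (by omega)
  · rw [eCount_eq_card_edgeFinset, ← e.card_edgeFinset_eq, card_edgeFinset_join,
      eCount_eq_card_edgeFinset (G := turanGraph _ _),
      ← eCount_eq_card_edgeFinset (G := pairing _),
      eCount_pairing]
    simp only [Fintype.card_fin]
    ring
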